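/- Under the unicycle dynamics ẋ = cos θ, ẏ = sin θ, θ̇ = −k sin θ with k > 0 and θ_0 ∈ (0, π), the heading θ(t) converges to 0 as t → ∞; consequently the trajectory direction (cos θ(t), sin θ(t)) converges to (1, 0). -/

import Mathlib

open Real Filter

/-!
In the half-angle variable `u = tan (θ / 2)` the equation `θ' = -k sin θ` becomes `u' = -k u`, so
the solution through `θ₀ ∈ (-π, π)` is `2 arctan (tan (θ₀ / 2) e^{-kt})`. Since `-k sin` is
Lipschitz, this is the only solution, and for `k > 0` it visibly tends to `0`.
-/

namespace Real

lemma sin_two_mul_arctan (u : ℝ) : sin (2 * arctan u) = 2 * u / (1 + u ^ 2) := by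
  have hpos : (0 : ℝ) < 1 + u ^ 2 := by positivity
  rw [sin_two_mul, sin_arctan, cos_arctan]
  field_simp
  rw [sq_sqrt hpos.le]

end Real

noncomputable def headingSolution (k θ₀ t : ℝ) : ℝ :=
  2 * arctan (tan (θ₀ / 2) * exp (-k * t))

lemma headingSolution_zero {θ₀ : ℝ} (k : ℝ) (hθ₀ : |θ₀| < π) : headingSolution k θ₀ 0 = θ₀ := by
  obtain ⟨hlo, hhi⟩ := abs_lt.mp hθ₀
  rw [headingSolution, mul_zero, exp_zero, mul_one, arctan_tan] <;> linarith

lemma hasDerivAt_headingSolution (k θ₀ t : ℝ) :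
    HasDerivAt (headingSolution k θ₀) (-k * sin (headingSolution k θ₀ t)) t := by
  have hexp : HasDerivAt (fun t => tan (θ₀ / 2) * exp (-k * t))
      (tan (θ₀ / 2) * (exp (-k * t) * -k)) t := by
    simpa using ((hasDerivAt_exp _).comp t ((hasDerivAt_id t).const_mul (-k))).const_mul _
  refine (((hasDerivAt_arctan _).comp t hexp).const_mul 2).congr_deriv ?_
  have hpos : 0 < 1 + (tan (θ₀ / 2) * exp (-k * t)) ^ 2 := by positivity
  rw [headingSolution, sin_two_mul_arctan]
  field_simp

lemma tendsto_headingSolution_atTop {k : ℝ} (hk : 0 < k) (θ₀ : ℝ) :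
    Tendsto (headingSolution k θ₀) atTop (nhds 0) := by
  have hexp : Tendsto (fun t => tan (θ₀ / 2) * exp (-k * t)) atTop (nhds 0) := by
    simpa using (tendsto_exp_atBot.comp
      (tendsto_id.const_mul_atTop_of_neg (neg_neg_iff_pos.mpr hk))).const_mul (tan (θ₀ / 2))
  unfold headingSolution
  simpa using ((continuous_arctan.tendsto 0).comp hexp).const_mul 2

lemma lipschitzWith_neg_mul_sin (k : ℝ) : LipschitzWith ‖-k‖₊ (fun y => -k * sin y) := by
  simpa [Function.comp_def] using (lipschitzWith_smul (-k)).comp lipschitzWith_sin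

lemma eq_headingSolution {k : ℝ} {θ : ℝ → ℝ} (hθ : ∀ t, HasDerivAt θ (-k * sin (θ t)) t)
    (hθ0 : |θ 0| < π) : θ = headingSolution k (θ 0) :=
  ODE_solution_unique_univ (v := fun _ y => -k * sin y) (s := fun _ => Set.univ) (t₀ := 0)
    (fun _ => (lipschitzWith_neg_mul_sin k).lipschitzOnWith)
    (fun t => ⟨hθ t, trivial⟩) (fun t => ⟨hasDerivAt_headingSolution k (θ 0) t, trivial⟩)
    (headingSolution_zero k hθ0).symm

theorem heading_converges_to_zero_general
    (k θ0 : ℝ) (hk : 0 < k) (h1 : 0 < θ0) (h2 : θ0 < Real.pi)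
    (θ : ℝ → ℝ)
    (hθ : ∀ t, HasDerivAt θ (-k * Real.sin (θ t)) t)
    (h0 : θ 0 = θ0) :
    Tendsto θ atTop (nhds 0)
      ∧ Tendsto (fun t => (Real.cos (θ t), Real.sin (θ t))) atTop
          (nhds ((1 : ℝ), (0 : ℝ))) := by
  have hθ0 : |θ 0| < π := abs_lt.mpr ⟨by linarith [pi_pos], by linarith⟩
  have hlim : Tendsto θ atTop (nhds 0) := by
    rw [eq_headingSolution hθ hθ0]
    exact tendsto_headingSolution_atTop hk _
  refine ⟨hlim, ?_⟩
  simpa [Function.comp_def] using ((continuous_cos.prodMk continuous_sin).tendsto 0).comp hlim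

/-- Under the unicycle dynamics `ẋ = cos θ, ẏ = sin θ, θ̇ = -k sin θ` with
`k > 0` and `θ(0) = θ₀ ∈ (0, π)`, the heading `θ(t) → 0` as `t → ∞`, and hence the direction
of travel `(cos θ(t), sin θ(t)) → (1, 0)`. -/
theorem heading_converges_to_zero
    (k θ0 : ℝ) (hk : 0 < k) (h1 : 0 < θ0) (h2 : θ0 < Real.pi)
    (x y θ : ℝ → ℝ)
    (hx : ∀ t, HasDerivAt x (Real.cos (θ t)) t)
    (hy : ∀ t, HasDerivAt y (Real.sin (θ t)) t)
    (hθ : ∀ t, HasDerivAt θ (-k * Real.sin (θ t)) t)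
    (h0 : θ 0 = θ0) :
    Tendsto θ atTop (nhds 0)
      ∧ Tendsto (fun t => (Real.cos (θ t), Real.sin (θ t))) atTop
          (nhds ((1 : ℝ), (0 : ℝ))) :=
  heading_converges_to_zero_general k θ0 hk h1 h2 θ hθ h0
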